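/- arXiv:1901.04428 — 3 statements merged into one kernel-verified Lean document; each statement's English description precedes it below -/
import Mathlib

section
/- Let G be a countable group acting faithfully on the right by homeomorphisms on a second countable Hausdorff topological space X. Let U ⊆ X be open, let K be a finite-index subgroup of R_G(U), and let N be a normal subgroup of K such that the quotient K/N is an FC-group (every element of K/N has finite conjugacy class). If x ∈ U is a point such that for every open V with x ∈ V ⊆ U the orbit {x·g : g ∈ R_G(V)} is infinite, then there exists an open neighborhood W of x such that [R_G(W), R_G(W)] ≤ N. -/
/-!
Replace `K` by a subgroup `L ≤ K` of finite index in `R_G(U)` and normalised by it (a relative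
normal core); by the orbit hypothesis every neighbourhood of `x` supports elements of `L` moving
`x`.

First, near `x` every commutator of elements of `L` supported there lies in `N`. Otherwise,
pushing bad pairs off `x` along a nested sequence of neighbourhoods produces bad pairs
`(A n, B n)` with pairwise disjoint supports, all inside a set `W` with `W·t ∩ W = ∅` for some
`t ∈ L`. As `tN` has finitely many conjugates in `K/N`, `B a⁻¹ t B a ≡ B b⁻¹ t B b` for some
`a ≠ b`, so `B a B b⁻¹` commutes with `t` modulo `N`; since `A a` commutes with `B b` and with
`t⁻¹ (B a B b⁻¹) t`, it commutes with `B a` modulo `N`, a contradiction.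

Then the double commutator trick: for `f, h` supported in a small enough neighbourhood `W` and
`s, s' ∈ L` moving `W` off itself and apart from each other, `⁅f, h⁆ = ⁅⁅f, s⁻¹⁆, ⁅h, s'⁻¹⁆⁆`,
and both inner commutators lie in `L` since `L` is normalised by `R_G(U)`.
-/

open MulOpposite

/-- Pointwise stabilizer of a set `A ⊆ X` for a right action of `G` on `X`:
`{g ∈ G : x·g = x for all x ∈ A}`. -/
def pointwiseStabilizer (G : Type*) {X : Type*} [Group G] [MulAction Gᵐᵒᵖ X] (A : Set X) :
    Subgroup G where
  carrier := {g : G | ∀ x ∈ A, op g • x = x}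
  one_mem' := by intro x _; simp
  mul_mem' := by
    intro g h hg hh x hx
    have h1 : op (g * h) • x = op h • (op g • x) := by
      rw [op_mul, mul_smul]
    rw [h1, hg x hx, hh x hx]
  inv_mem' := by
    intro g hg x hx
    have h1 : op g⁻¹ • (op g • x) = x := by
      rw [op_inv]; exact inv_smul_smul _ _
    rw [hg x hx] at h1
    exact h1

/-- Rigid stabilizer `R_G(U) = {g ∈ G : x·g = x for all x ∈ X \ U}`. -/
def rigidStabilizer (G : Type*) {X : Type*} [Group G] [MulAction Gᵐᵒᵖ X] (U : Set X) :
    Subgroup G :=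
  pointwiseStabilizer G Uᶜ

open scoped RightActions Pointwise commutatorElement

section Group

variable {G : Type*} [Group G]

theorem Subgroup.exists_le_relIndex_ne_zero_le_normalizer {K H : Subgroup G}
    (hK : K.relIndex H ≠ 0) :
    ∃ L ≤ K, L.relIndex H ≠ 0 ∧ H ≤ Subgroup.normalizer L := by
  have : (K.subgroupOf H).FiniteIndex := ⟨hK⟩
  set C := (K.subgroupOf H).normalCore
  refine ⟨C.map H.subtype, ?_, ?_, ?_⟩
  · rintro _ ⟨c, hc, rfl⟩
    exact Subgroup.mem_subgroupOf.1 (Subgroup.normalCore_le _ hc)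
  · rw [Subgroup.relIndex, Subgroup.subgroupOf,
      Subgroup.comap_map_eq_self_of_injective H.subtype_injective]
    exact Subgroup.FiniteIndex.index_ne_zero
  · calc H = (Subgroup.normalizer (C : Set H)).map H.subtype := by
          rw [Subgroup.normalizer_eq_top, ← MonoidHom.range_eq_map, Subgroup.range_subtype]
      _ ≤ _ := Subgroup.le_normalizer_map _

theorem commute_of_conj_eq {t α β β' : G}
    (hconj : β⁻¹ * t * β = β'⁻¹ * t * β') (hαβ' : Commute α β')
    (hαβt : Commute α (t⁻¹ * β * t)) (hαβ't : Commute α (t⁻¹ * β' * t)) : Commute α β := by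
  have htv : t * (β * β'⁻¹) = β * β'⁻¹ * t := by
    calc t * (β * β'⁻¹) = β * (β⁻¹ * t * β) * β'⁻¹ := by group
      _ = β * (β'⁻¹ * t * β') * β'⁻¹ := by rw [hconj]
      _ = β * β'⁻¹ * t := by group
  have hv : t⁻¹ * β * t * (t⁻¹ * β' * t)⁻¹ = β * β'⁻¹ := by
    calc t⁻¹ * β * t * (t⁻¹ * β' * t)⁻¹ = t⁻¹ * (β * β'⁻¹ * t) := by group
      _ = β * β'⁻¹ := by rw [← htv]; group
  have hαv : Commute α (β * β'⁻¹) := hv ▸ hαβt.mul_right hαβ't.inv_right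
  simpa using hαv.mul_right hαβ'

/-- Two of the conjugates `(B n)⁻¹ t (B n)` agree in `K ⧸ N`, where `commute_of_conj_eq` applies. -/
theorem exists_commutatorElement_mem_of_finite_cosets {K N : Subgroup G}
    [(N.subgroupOf K).Normal] {t : G} (ht : t ∈ K)
    (hFC : {c : Set G | ∃ k ∈ K, c = (fun y : G => (k⁻¹ * t * k) * y) '' (N : Set G)}.Finite)
    {A B : ℕ → G} (hA : ∀ n, A n ∈ K) (hB : ∀ n, B n ∈ K)
    (hAB : Pairwise fun a b => Commute (A a) (B b)) (hAtB : ∀ a b, Commute (A a) (t⁻¹ * B b * t)) :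
    ∃ a, ⁅A a, B a⁆ ∈ N := by
  have hmem : ∀ n, (fun y : G => ((B n)⁻¹ * t * B n) * y) '' (N : Set G) ∈
      {c : Set G | ∃ k ∈ K, c = (fun y : G => (k⁻¹ * t * k) * y) '' (N : Set G)} :=
    fun n => ⟨B n, hB n, rfl⟩
  obtain ⟨a, b, hab, hcoset⟩ := hFC.exists_lt_map_eq_of_forall_mem hmem
  refine ⟨a, ?_⟩
  let π : K →* K ⧸ N.subgroupOf K := QuotientGroup.mk' _
  let A' n : K := ⟨A n, hA n⟩
  let B' n : K := ⟨B n, hB n⟩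
  let t' : K := ⟨t, ht⟩
  have hconj : π ((B' a)⁻¹ * t' * B' a) = π ((B' b)⁻¹ * t' * B' b) := by
    obtain ⟨n, hn, hgn⟩ : (B a)⁻¹ * t * B a ∈
        (fun y : G => ((B b)⁻¹ * t * B b) * y) '' (N : Set G) :=
      hcoset ▸ ⟨1, N.one_mem, mul_one _⟩
    have hmemN : ((B b)⁻¹ * t * B b)⁻¹ * ((B a)⁻¹ * t * B a) ∈ N := by
      rwa [← hgn, inv_mul_cancel_left]
    exact (QuotientGroup.eq.2 (Subgroup.mem_subgroupOf.2 hmemN)).symm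
  have hπ : ∀ {g h : K}, Commute (g : G) h → Commute (π g) (π h) :=
    fun {g h} hgh => (show Commute g h from Subtype.ext hgh.eq).map π
  have key : Commute (π (A' a)) (π (B' a)) := by
    refine commute_of_conj_eq (t := π t') (β' := π (B' b))
      (by simpa only [map_mul, map_inv] using hconj) (hπ (hAB hab.ne)) ?_ ?_
    · simpa only [map_mul, map_inv] using hπ (g := A' a) (h := t'⁻¹ * B' a * t') (hAtB a a)
    · simpa only [map_mul, map_inv] using hπ (g := A' a) (h := t'⁻¹ * B' b * t') (hAtB a b)
  rwa [← commutatorElement_eq_one_iff_commute, ← map_commutatorElement, QuotientGroup.mk'_apply,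
    QuotientGroup.eq_one_iff, Subgroup.mem_subgroupOf] at key

theorem commutatorElement_mul_mul_of_commute {f h d d' : G}
    (hdh : Commute d h) (hdd' : Commute d d') (hd'f : Commute d' f) :
    ⁅f * d, h * d'⁆ = ⁅f, h⁆ := by
  simp only [commutatorElement_def]
  calc f * d * (h * d') * (f * d)⁻¹ * (h * d')⁻¹
      = f * (d * h) * d' * d⁻¹ * f⁻¹ * d'⁻¹ * h⁻¹ := by group
    _ = f * h * (d * d') * d⁻¹ * f⁻¹ * d'⁻¹ * h⁻¹ := by rw [hdh.eq]; group
    _ = f * h * (d' * f⁻¹) * d'⁻¹ * h⁻¹ := by rw [hdd'.eq]; group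
    _ = f * h * f⁻¹ * h⁻¹ := by rw [hd'f.inv_right.eq]; group

end Group

section RigidStabilizer

variable {G X : Type*} [Group G] [MulAction Gᵐᵒᵖ X]

theorem mem_rigidStabilizer_iff {A : Set X} {g : G} :
    g ∈ rigidStabilizer G A ↔ ∀ y ∉ A, y <• g = y :=
  Iff.rfl

theorem rigidStabilizer_mono {A B : Set X} (h : A ⊆ B) :
    rigidStabilizer G A ≤ rigidStabilizer G B :=
  fun _ hg y hy => hg y fun hyA => hy (h hyA)

theorem smul_set_eq_of_mem_rigidStabilizer {A : Set X} {g : G}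
    (hg : g ∈ rigidStabilizer G A) : A <• g = A := by
  have hcompl : Aᶜ <• g = Aᶜ := by
    ext y
    refine ⟨?_, fun hy => ⟨y, hy, hg y hy⟩⟩
    rintro ⟨z, hz, rfl⟩
    simpa only [hg z hz] using hz
  rwa [Set.smul_set_compl, compl_inj_iff] at hcompl

theorem smul_set_subset_of_mem_rigidStabilizer {A B : Set X} {g : G}
    (hg : g ∈ rigidStabilizer G A) (hBA : B ⊆ A) : B <• g ⊆ A :=
  (Set.smul_set_mono hBA).trans (smul_set_eq_of_mem_rigidStabilizer hg).subset

theorem conj_mem_rigidStabilizer {A : Set X} {g : G} (hg : g ∈ rigidStabilizer G A) (t : G) :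
    t⁻¹ * g * t ∈ rigidStabilizer G (A <• t) := by
  refine mem_rigidStabilizer_iff.2 fun y hy => ?_
  rw [Set.mem_smul_set_iff_inv_smul_mem, ← op_inv] at hy
  rw [op_smul_mul, op_smul_mul, mem_rigidStabilizer_iff.1 hg _ hy, ← op_smul_mul, inv_mul_cancel,
    op_one, one_smul]

theorem commute_of_mem_rigidStabilizer [FaithfulSMul Gᵐᵒᵖ X] {A B : Set X} (hAB : Disjoint A B)
    {f h : G} (hf : f ∈ rigidStabilizer G A) (hh : h ∈ rigidStabilizer G B) : Commute f h := by
  have hfA : ∀ y ∈ A, y <• f ∈ A := fun y hy =>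
    smul_set_eq_of_mem_rigidStabilizer hf ▸ Set.smul_mem_smul_set hy
  have hhB : ∀ y ∈ B, y <• h ∈ B := fun y hy =>
    smul_set_eq_of_mem_rigidStabilizer hh ▸ Set.smul_mem_smul_set hy
  rw [mem_rigidStabilizer_iff] at hf hh
  refine op_injective (eq_of_smul_eq_smul (α := X) fun y => ?_)
  rw [op_smul_mul, op_smul_mul]
  by_cases hyA : y ∈ A
  · rw [hh _ (hAB.notMem_of_mem_left (hfA y hyA)), hh _ (hAB.notMem_of_mem_left hyA)]
  by_cases hyB : y ∈ B
  · rw [hf _ hyA, hf _ (hAB.notMem_of_mem_right (hhB y hyB))]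
  · rw [hf _ hyA, hh _ hyB, hf _ hyA]

end RigidStabilizer

section Orbit

variable {G X : Type*} [Group G] [MulAction Gᵐᵒᵖ X]

/-- If `L ⊓ Δ` fixed `x`, then `x <• g` would only depend on the coset `(L ⊓ Δ) g`, and there
are finitely many of these. -/
theorem exists_smul_ne_of_relIndex_ne_zero {L Δ : Subgroup G} (hL : L.relIndex Δ ≠ 0) {x : X}
    (horb : {y : X | ∃ g ∈ Δ, y = x <• g}.Infinite) : ∃ g ∈ L ⊓ Δ, x <• g ≠ x := by
  by_contra! hfix
  have : Finite (Δ ⧸ L.subgroupOf Δ) := Subgroup.index_ne_zero_iff_finite.1 hL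
  refine horb ((Set.finite_range fun q : Δ ⧸ L.subgroupOf Δ => x <• ((q.out : Δ) : G)⁻¹).subset ?_)
  rintro _ ⟨g, hg, rfl⟩
  obtain ⟨l, hl⟩ := QuotientGroup.mk_out_eq_mul (L.subgroupOf Δ) (⟨g, hg⟩ : Δ)⁻¹
  refine ⟨QuotientGroup.mk (⟨g, hg⟩ : Δ)⁻¹, ?_⟩
  have hl' : ((l : Δ) : G) ∈ L ⊓ Δ := ⟨Subgroup.mem_subgroupOf.1 l.2, (l : Δ).2⟩
  have hlx : x <• ((l : Δ) : G)⁻¹ = x := hfix _ (inv_mem hl')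
  simp only [hl, Subgroup.coe_mul, Subgroup.coe_inv, mul_inv_rev, inv_inv, op_smul_mul, hlx]

end Orbit

section LocallyMoves

variable {G X : Type*} [Group G] [MulAction Gᵐᵒᵖ X] [TopologicalSpace X]

def LocallyMoves (L : Subgroup G) (U : Set X) (x : X) : Prop :=
  ∀ V, IsOpen V → x ∈ V → V ⊆ U → ∃ g ∈ L ⊓ rigidStabilizer G V, x <• g ≠ x

theorem LocallyMoves.mono {L : Subgroup G} {U V : Set X} {x : X} (h : LocallyMoves L U x)
    (hVU : V ⊆ U) : LocallyMoves L V x :=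
  fun W hW hxW hWV => h W hW hxW (hWV.trans hVU)

theorem locallyMoves_of_relIndex_ne_zero {L : Subgroup G} {U : Set X} {x : X}
    (hL : L.relIndex (rigidStabilizer G U) ≠ 0)
    (horb : ∀ V : Set X, IsOpen V → x ∈ V → V ⊆ U →
      {y : X | ∃ g ∈ rigidStabilizer G V, y = x <• g}.Infinite) :
    LocallyMoves L U x := by
  intro V hV hxV hVU
  refine exists_smul_ne_of_relIndex_ne_zero ?_ (horb V hV hxV hVU)
  refine Subgroup.relIndex_ne_zero_trans hL ?_
  rw [Subgroup.relIndex_eq_one.2 (rigidStabilizer_mono hVU)]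
  exact one_ne_zero

end LocallyMoves

section Topology

variable {G X : Type*} [Group G] [MulAction Gᵐᵒᵖ X] [TopologicalSpace X] [T2Space X]
  [ContinuousConstSMul Gᵐᵒᵖ X]

theorem exists_isOpen_disjoint_smul_set {x : X} {g : G} (hg : x <• g ≠ x) {V : Set X}
    (hV : IsOpen V) (hxV : x ∈ V) : ∃ W, IsOpen W ∧ x ∈ W ∧ W ⊆ V ∧ Disjoint (W <• g) W := by
  obtain ⟨O, O', hO, hO', hxO, hxO', hOO'⟩ := t2_separation hg
  refine ⟨V ∩ O' ∩ (fun y => y <• g) ⁻¹' O,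
    (hV.inter hO').inter (hO.preimage (continuous_const_smul _)), ⟨⟨hxV, hxO'⟩, hxO⟩,
    fun y hy => hy.1.1, hOO'.mono ?_ fun y hy => hy.1.2⟩
  exact Set.smul_set_subset_iff.2 fun y hy => hy.2

variable {L : Subgroup G} {U : Set X} {x : X}

theorem LocallyMoves.exists_antitone_disjoint_smul_set (hmove : LocallyMoves L U x)
    (hU : IsOpen U) (hx : x ∈ U) :
    ∃ (V : ℕ → Set X) (s : ℕ → G), Antitone V ∧ (∀ n, IsOpen (V n) ∧ x ∈ V n ∧ V n ⊆ U) ∧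
      (∀ n, s n ∈ L ⊓ rigidStabilizer G (V n)) ∧ ∀ n, Disjoint (V (n + 1) <• s n) (V (n + 1)) := by
  have hstep : ∀ V : {V : Set X // IsOpen V ∧ x ∈ V ∧ V ⊆ U},
      ∃ (W : {V : Set X // IsOpen V ∧ x ∈ V ∧ V ⊆ U}) (s : G),
        W.1 ⊆ V.1 ∧ s ∈ L ⊓ rigidStabilizer G V.1 ∧ Disjoint (W.1 <• s) W.1 := by
    rintro ⟨V, hV, hxV, hVU⟩
    obtain ⟨s, hs, hsx⟩ := hmove V hV hxV hVU
    obtain ⟨W, hW, hxW, hWV, hWs⟩ := exists_isOpen_disjoint_smul_set hsx hV hxV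
    exact ⟨⟨W, hW, hxW, hWV.trans hVU⟩, s, hWV, hs, hWs⟩
  choose next s hnext hs hdisj using hstep
  let c (n : ℕ) := next^[n] ⟨U, hU, hx, subset_rfl⟩
  have hc (n : ℕ) : c (n + 1) = next (c n) := Function.iterate_succ_apply' _ _ _
  refine ⟨fun n => (c n).1, fun n => s (c n), antitone_nat_of_succ_le fun n => ?_,
    fun n => (c n).2, fun n => hs _, fun n => ?_⟩
  · rw [hc]
    exact hnext _
  · dsimp only
    rw [hc]
    exact hdisj _

theorem LocallyMoves.exists_pairwise_disjoint_smul_set (hmove : LocallyMoves L U x)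
    (hU : IsOpen U) (hx : x ∈ U) :
    ∃ t ∈ L, ∃ W : Set X, Disjoint (W <• t) W ∧ ∃ (V : ℕ → Set X) (s : ℕ → G),
      (∀ n, IsOpen (V n) ∧ x ∈ V n ∧ V n ⊆ U) ∧ (∀ n, s n ∈ L ∧ V n <• s n ⊆ W) ∧
      Pairwise (Function.onFun Disjoint fun n => V n <• s n) := by
  obtain ⟨V, s, hanti, hV, hs, hdisj⟩ := hmove.exists_antitone_disjoint_smul_set hU hx
  have hsub (n : ℕ) : V (n + 2) <• s (n + 1) ⊆ V (n + 1) :=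
    smul_set_subset_of_mem_rigidStabilizer (hs (n + 1)).2 (hanti (Nat.le_succ _))
  refine ⟨s 0, (hs 0).1, V 1, hdisj 0, fun n => V (n + 2), fun n => s (n + 1),
    fun n => hV (n + 2), fun n => ⟨(hs (n + 1)).1, (hsub n).trans (hanti (Nat.le_add_left 1 n))⟩,
    (pairwise_disjoint_on _).2 fun a b hab => (hdisj (a + 1)).mono_right ?_⟩
  exact (hsub b).trans (hanti (by omega))

theorem LocallyMoves.exists_isOpen_disjoint_smul_set_pair (hmove : LocallyMoves L U x)
    (hU : IsOpen U) (hx : x ∈ U) :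
    ∃ W, IsOpen W ∧ x ∈ W ∧ W ⊆ U ∧ ∃ s ∈ L ⊓ rigidStabilizer G U, ∃ s' ∈ L ⊓ rigidStabilizer G U,
      Disjoint (W <• s) W ∧ Disjoint (W <• s') W ∧ Disjoint (W <• s) (W <• s') := by
  obtain ⟨s, hs, hsx⟩ := hmove U hU hx subset_rfl
  obtain ⟨W₁, hW₁, hxW₁, hW₁U, hW₁s⟩ := exists_isOpen_disjoint_smul_set hsx hU hx
  obtain ⟨s', hs', hs'x⟩ := hmove W₁ hW₁ hxW₁ hW₁U
  obtain ⟨W, hW, hxW, hWW₁, hWs'⟩ := exists_isOpen_disjoint_smul_set hs'x hW₁ hxW₁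
  exact ⟨W, hW, hxW, hWW₁.trans hW₁U, s, hs, s', ⟨hs'.1, rigidStabilizer_mono hW₁U hs'.2⟩,
    hW₁s.mono (Set.smul_set_mono hWW₁) hWW₁, hWs',
    hW₁s.mono (Set.smul_set_mono hWW₁) (smul_set_subset_of_mem_rigidStabilizer hs'.2 hWW₁)⟩

end Topology

section Commutators

variable {G X : Type*} [Group G] [MulAction Gᵐᵒᵖ X] [TopologicalSpace X] [T2Space X]
  [ContinuousConstSMul Gᵐᵒᵖ X] [FaithfulSMul Gᵐᵒᵖ X] {L N : Subgroup G} {U : Set X} {x : X}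

theorem LocallyMoves.exists_nhds_commutatorElement_mem {K : Subgroup G}
    [(N.subgroupOf K).Normal] (hNK : N ≤ K) (hLK : L ≤ K)
    (hFC : ∀ g ∈ K,
      {c : Set G | ∃ k ∈ K, c = (fun y : G => (k⁻¹ * g * k) * y) '' (N : Set G)}.Finite)
    (hmove : LocallyMoves L U x) (hU : IsOpen U) (hx : x ∈ U) :
    ∃ W, IsOpen W ∧ x ∈ W ∧ W ⊆ U ∧
      ∀ f ∈ L ⊓ rigidStabilizer G W, ∀ h ∈ L ⊓ rigidStabilizer G W, ⁅f, h⁆ ∈ N := by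
  by_contra! hbad
  obtain ⟨t, htL, W, htW, V, s, hV, hs, hdisj⟩ := hmove.exists_pairwise_disjoint_smul_set hU hx
  choose f hf h hh hfh using fun n => hbad (V n) (hV n).1 (hV n).2.1 (hV n).2.2
  have hconj {g : ℕ → G} (hg : ∀ n, g n ∈ L ⊓ rigidStabilizer G (V n)) (n : ℕ) :
      (s n)⁻¹ * g n * s n ∈ L ⊓ rigidStabilizer G (V n <• s n) :=
    have ⟨hgL, hgV⟩ := Subgroup.mem_inf.1 (hg n)
    Subgroup.mem_inf.2
      ⟨mul_mem (mul_mem (inv_mem (hs n).1) hgL) (hs n).1, conj_mem_rigidStabilizer hgV _⟩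
  have hA := hconj hf
  have hB := hconj hh
  obtain ⟨a, ha⟩ := exists_commutatorElement_mem_of_finite_cosets (hLK htL) (hFC t (hLK htL))
    (fun n => hLK (hA n).1) (fun n => hLK (hB n).1)
    (fun a b hab => commute_of_mem_rigidStabilizer (hdisj hab) (hA a).2 (hB b).2)
    (fun a b => commute_of_mem_rigidStabilizer htW.symm (rigidStabilizer_mono (hs a).2 (hA a).2)
      (rigidStabilizer_mono (Set.smul_set_mono (hs b).2) (conj_mem_rigidStabilizer (hB b).2 t)))
  refine hfh a ((Subgroup.mem_normalizer_iff''.1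
    (Subgroup.le_normalizer_of_normal_subgroupOf hNK (hLK (hs a).1)) _).2 ?_)
  convert ha using 1
  simp only [commutatorElement_def]
  group

theorem LocallyMoves.exists_nhds_commutator_le (hmove : LocallyMoves L U x) (hU : IsOpen U)
    (hx : x ∈ U) (hUL : rigidStabilizer G U ≤ Subgroup.normalizer L)
    (hcomm : ∀ f ∈ L ⊓ rigidStabilizer G U, ∀ h ∈ L ⊓ rigidStabilizer G U, ⁅f, h⁆ ∈ N) :
    ∃ W, IsOpen W ∧ x ∈ W ∧ ⁅rigidStabilizer G W, rigidStabilizer G W⁆ ≤ N := by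
  obtain ⟨W, hW, hxW, hWU, s, hs, s', hs', hsW, hs'W, hss'⟩ :=
    hmove.exists_isOpen_disjoint_smul_set_pair hU hx
  refine ⟨W, hW, hxW, Subgroup.commutator_le.2 fun f hf h hh => ?_⟩
  have hmem {g r : G} (hg : g ∈ rigidStabilizer G W) (hr : r ∈ L ⊓ rigidStabilizer G U) :
      g * (r⁻¹ * g⁻¹ * r) ∈ L ⊓ rigidStabilizer G U := by
    have hgU := rigidStabilizer_mono hWU hg
    obtain ⟨hrL, hrU⟩ := Subgroup.mem_inf.1 hr
    rw [← mul_assoc, ← mul_assoc]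
    exact mul_mem (Subgroup.mem_inf.2 ⟨(Subgroup.mem_normalizer_iff.1 (hUL hgU) _).1 (inv_mem hrL),
      mul_mem (mul_mem hgU (inv_mem hrU)) (inv_mem hgU)⟩) hr
  rw [← commutatorElement_mul_mul_of_commute (d := s⁻¹ * f⁻¹ * s) (d' := s'⁻¹ * h⁻¹ * s')
    (commute_of_mem_rigidStabilizer hsW (conj_mem_rigidStabilizer (inv_mem hf) s) hh)
    (commute_of_mem_rigidStabilizer hss' (conj_mem_rigidStabilizer (inv_mem hf) s)
      (conj_mem_rigidStabilizer (inv_mem hh) s'))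
    (commute_of_mem_rigidStabilizer hs'W (conj_mem_rigidStabilizer (inv_mem hh) s') hf)]
  exact hcomm _ (hmem hf hs) _ (hmem hh hs')

end Commutators

theorem double_commutator_fc_quotient_general
    {G X : Type*} [Group G] [TopologicalSpace X]
    [T2Space X] [MulAction Gᵐᵒᵖ X]
    (hcont : ∀ g : G, Continuous fun x : X => op g • x)
    (hfaith : ∀ g : G, (∀ x : X, op g • x = x) → g = 1)
    (U : Set X) (hU : IsOpen U)
    (K N : Subgroup G)
    (hKfi : K.relIndex (rigidStabilizer G U) ≠ 0)
    (hNle : N ≤ K) (hNnormal : (N.subgroupOf K).Normal)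
    (hFC : ∀ g ∈ K,
      {c : Set G | ∃ k ∈ K, c = (fun y : G => (k⁻¹ * g * k) * y) '' (N : Set G)}.Finite)
    (x : X) (hx : x ∈ U)
    (horb : ∀ V : Set X, IsOpen V → x ∈ V → V ⊆ U →
      {y : X | ∃ g ∈ rigidStabilizer G V, y = op g • x}.Infinite) :
    ∃ W : Set X, IsOpen W ∧ x ∈ W ∧
      ⁅rigidStabilizer G W, rigidStabilizer G W⁆ ≤ N := by
  have : ContinuousConstSMul Gᵐᵒᵖ X := ⟨fun g => hcont g.unop⟩
  have : FaithfulSMul Gᵐᵒᵖ X := ⟨fun {g g'} hgg' => unop_injective <| mul_inv_eq_one.1 <|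
    hfaith _ fun y => by simp [mul_smul, hgg']⟩
  obtain ⟨L, hLK, hLfi, hUL⟩ := Subgroup.exists_le_relIndex_ne_zero_le_normalizer hKfi
  have hmove : LocallyMoves L U x := locallyMoves_of_relIndex_ne_zero hLfi horb
  obtain ⟨V, hV, hxV, hVU, hcomm⟩ :=
    hmove.exists_nhds_commutatorElement_mem hNle hLK hFC hU hx
  exact (hmove.mono hVU).exists_nhds_commutator_le hV hxV
    ((rigidStabilizer_mono hVU).trans hUL) hcomm

/-- **Lemma 3.4 (variant of the double commutator lemma).**
Let `G` be a countable group acting faithfully by homeomorphisms on a second countable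
Hausdorff space `X` (encoded as a left action of `Gᵐᵒᵖ`, so `x·g = op g • x`).
Let `U` be open, `K` a finite-index subgroup of `R_G(U)`, and `N` a normal subgroup of
`K` with `K/N` an FC-group (expressed by finiteness of the sets of cosets
`{(k⁻¹gk)N : k ∈ K}`).  If `x ∈ U` is such that the orbit `x·R_G(V)` is infinite for
every open `V` with `x ∈ V ⊆ U`, then there is an open neighborhood `W` of `x` with
`[R_G(W), R_G(W)] ≤ N`. -/
theorem double_commutator_fc_quotient
    {G X : Type*} [Group G] [Countable G] [TopologicalSpace X]
    [SecondCountableTopology X] [T2Space X] [MulAction Gᵐᵒᵖ X]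
    (hcont : ∀ g : G, Continuous fun x : X => op g • x)
    (hfaith : ∀ g : G, (∀ x : X, op g • x = x) → g = 1)
    (U : Set X) (hU : IsOpen U)
    (K N : Subgroup G)
    (hKle : K ≤ rigidStabilizer G U)
    (hKfi : K.relIndex (rigidStabilizer G U) ≠ 0)
    (hNle : N ≤ K) (hNnormal : (N.subgroupOf K).Normal)
    (hFC : ∀ g ∈ K,
      {c : Set G | ∃ k ∈ K, c = (fun y : G => (k⁻¹ * g * k) * y) '' (N : Set G)}.Finite)
    (x : X) (hx : x ∈ U)
    (horb : ∀ V : Set X, IsOpen V → x ∈ V → V ⊆ U →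
      {y : X | ∃ g ∈ rigidStabilizer G V, y = op g • x}.Infinite) :
    ∃ W : Set X, IsOpen W ∧ x ∈ W ∧
      ⁅rigidStabilizer G W, rigidStabilizer G W⁆ ≤ N :=
  double_commutator_fc_quotient_general hcont hfaith U hU K N hKfi hNle hNnormal hFC x hx horb
end

section
/- Let G be a group acting faithfully on the right by homeomorphisms on a Hausdorff topological space X, and let N be a nontrivial normal subgroup of G. Then there exists a nonempty open subset U ⊆ X such that [R_G(U), R_G(U)] ≤ N. -/
open MulOpposite

/-! A nontrivial element `g ∈ N` moves some small open set `U` off itself. Then for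
`a, b ∈ R_G(U)` the conjugate `g b g⁻¹` is supported on `U·g⁻¹`, disjoint from `U`, so it
commutes with `a`; since `g ≡ 1` modulo `N`, this says that `a` and `b` commute modulo `N`. -/

open scoped commutatorElement

theorem Subgroup.Normal.commutatorElement_mem_of_commute_conj {G : Type*} [Group G]
    {N : Subgroup G} (hN : N.Normal) {g a b : G} (hg : g ∈ N) (h : Commute a (g * b * g⁻¹)) :
    ⁅a, b⁆ ∈ N := by
  have := hN
  rw [← QuotientGroup.eq_one_iff, ← QuotientGroup.mk'_apply, map_commutatorElement,
    commutatorElement_eq_one_iff_commute]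
  have hg1 : (g : G ⧸ N) = 1 := (QuotientGroup.eq_one_iff g).mpr hg
  simpa [hg1] using h.map (QuotientGroup.mk' N)

theorem exists_isOpen_disjoint_preimage {X : Type*} [TopologicalSpace X] [T2Space X]
    {f : X → X} (hf : Continuous f) {x : X} (hx : f x ≠ x) :
    ∃ U : Set X, IsOpen U ∧ x ∈ U ∧ Disjoint U (f ⁻¹' U) := by
  obtain ⟨W, V, hW, hV, hxW, hxV, hWV⟩ := t2_separation hx
  refine ⟨V ∩ f ⁻¹' W, hV.inter (hW.preimage hf), ⟨hxV, hxW⟩, ?_⟩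
  exact Set.disjoint_left.mpr fun y hy hfy => Set.disjoint_left.mp hWV hy.2 hfy.1

section RigidStabilizer

variable {G X : Type*} [Group G] [MulAction Gᵐᵒᵖ X] {U V : Set X} {a b : G}

theorem eq_of_forall_op_smul_eq (hfaith : ∀ g : G, (∀ x : X, op g • x = x) → g = 1)
    (h : ∀ x : X, op a • x = op b • x) : a = b :=
  mul_inv_eq_one.mp <| hfaith _ fun x => by rw [op_mul, mul_smul, h, op_inv, inv_smul_smul]

theorem smul_mem_of_mem_rigidStabilizer (ha : a ∈ rigidStabilizer G U) {x : X} (hx : x ∈ U) :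
    op a • x ∈ U := by
  by_contra hax
  have hfix : op a⁻¹ • (op a • x) = op a • x := inv_mem ha _ hax
  rw [op_inv, inv_smul_smul] at hfix
  exact hax (hfix ▸ hx)

theorem conj_mem_rigidStabilizer_preimage (g : G) (hb : b ∈ rigidStabilizer G U) :
    g * b * g⁻¹ ∈ rigidStabilizer G ((op g • ·) ⁻¹' U) := by
  intro x hx
  rw [op_mul, op_mul, mul_smul, mul_smul, hb _ hx, op_inv, inv_smul_smul]

theorem commute_of_mem_rigidStabilizer_of_disjoint
    (hfaith : ∀ g : G, (∀ x : X, op g • x = x) → g = 1) (hUV : Disjoint U V)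
    (ha : a ∈ rigidStabilizer G U) (hb : b ∈ rigidStabilizer G V) : Commute a b := by
  have hfix_a : ∀ x ∈ V, op a • x = x := fun x hx => ha x (Set.disjoint_right.mp hUV hx)
  have hfix_b : ∀ x ∈ U, op b • x = x := fun x hx => hb x (Set.disjoint_left.mp hUV hx)
  have hpoint : ∀ x : X, op b • op a • x = op a • op b • x := by
    intro x
    by_cases hxU : x ∈ U
    · rw [hfix_b _ (smul_mem_of_mem_rigidStabilizer ha hxU), hfix_b x hxU]
    by_cases hxV : x ∈ V
    · rw [hfix_a _ (smul_mem_of_mem_rigidStabilizer hb hxV), hfix_a x hxV]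
    · rw [ha x hxU, hb x hxV, ha x hxU]
  exact eq_of_forall_op_smul_eq hfaith fun x => by rw [op_mul, op_mul, mul_smul, mul_smul, hpoint]

end RigidStabilizer

/-- **Double commutator lemma for normal subgroups** (Nekrashevych; Lemma 1.1).
If a group `G` acts faithfully by homeomorphisms on a Hausdorff space `X`
(the right action is encoded as a left action of `Gᵐᵒᵖ`, so `x·g = op g • x`)
and `N` is a nontrivial normal subgroup of `G`, then there is a nonempty open
`U ⊆ X` with `[R_G(U), R_G(U)] ≤ N`. -/
theorem double_commutator_normal
    {G X : Type*} [Group G] [TopologicalSpace X] [T2Space X] [MulAction Gᵐᵒᵖ X]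
    (hcont : ∀ g : G, Continuous fun x : X => op g • x)
    (hfaith : ∀ g : G, (∀ x : X, op g • x = x) → g = 1)
    (N : Subgroup G) (hN : N.Normal) (hNbot : N ≠ ⊥) :
    ∃ U : Set X, IsOpen U ∧ U.Nonempty ∧
      ⁅rigidStabilizer G U, rigidStabilizer G U⁆ ≤ N := by
  obtain ⟨g, hgN, hg1⟩ := N.bot_or_exists_ne_one.resolve_left hNbot
  obtain ⟨x, hx⟩ : ∃ x : X, op g • x ≠ x := by
    by_contra! h
    exact hg1 (hfaith g h)
  obtain ⟨U, hU, hxU, hdisj⟩ := exists_isOpen_disjoint_preimage (hcont g) hx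
  refine ⟨U, hU, ⟨x, hxU⟩, Subgroup.commutator_le.mpr fun a ha b hb => ?_⟩
  exact hN.commutatorElement_mem_of_commute_conj hgN <|
    commute_of_mem_rigidStabilizer_of_disjoint hfaith hdisj ha
      (conj_mem_rigidStabilizer_preimage g hb)
end

section
/- Let Γ be a group acting faithfully by tree automorphisms and level transitively on the boundary X of the spherically symmetric rooted tree with valency sequence d. If u is a finite word such that the rigid vertex stabilizer Rist_Γ(u) is nontrivial, then Rist_Γ(u) has no fixed point in the cylinder C_u: for every x ∈ C_u there exists g ∈ Rist_Γ(u) with x·g ≠ x. -/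
open MulOpposite MeasureTheory

/-- The σ-algebra on the space of subgroups of `G`, generated by the sets
`{H : g ∈ H}` for `g ∈ G` (the Borel σ-algebra of the Chabauty topology). -/
instance subgroupMeasurableSpace (G : Type*) [Group G] : MeasurableSpace (Subgroup G) :=
  MeasurableSpace.generateFrom {A : Set (Subgroup G) | ∃ g : G, A = {H : Subgroup G | g ∈ H}}

/-- Conjugation `H ↦ g⁻¹ H g` on subgroups. -/
def conjSubgroup {G : Type*} [Group G] (g : G) (H : Subgroup G) : Subgroup G :=
  Subgroup.map (MulAut.conj g⁻¹).toMonoidHom H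

/-- The fixed-point set of a subgroup `H` in `X`: `Fix(H) = {x : x·h = x for all h ∈ H}`. -/
def fixedSet (X : Type*) {G : Type*} [Group G] [MulAction Gᵐᵒᵖ X] (H : Subgroup G) : Set X :=
  {x : X | ∀ h ∈ H, op h • x = x}

/-- The cylinder in `∏ i, Fin (d i)` of the length-`ℓ` prefix of `z`:
`{x : x i = z i for all i < ℓ}`.  Since every finite word of length `ℓ` extends to a
boundary point, cylinders of length-`ℓ` words are exactly the sets of this form. -/
def cylinder (d : ℕ → ℕ) (ℓ : ℕ) (z : ∀ i, Fin (d i)) : Set (∀ i, Fin (d i)) :=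
  {x | ∀ i < ℓ, x i = z i}

/-- `Γ` acts by tree automorphisms: every element maps every cylinder of a length-`ℓ`
word onto a cylinder of a length-`ℓ` word. -/
def ActsByTreeAutomorphisms (G : Type*) (d : ℕ → ℕ) [Group G]
    [MulAction Gᵐᵒᵖ (∀ i, Fin (d i))] : Prop :=
  ∀ g : G, ∀ ℓ : ℕ, ∀ z : ∀ i, Fin (d i), ∃ z' : ∀ i, Fin (d i),
    (fun x : ∀ i, Fin (d i) => op g • x) '' cylinder d ℓ z = cylinder d ℓ z'

/-- The action of `Γ` is level transitive: for each `ℓ` the induced action on cylinders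
of length-`ℓ` words is transitive. -/
def LevelTransitive (G : Type*) (d : ℕ → ℕ) [Group G]
    [MulAction Gᵐᵒᵖ (∀ i, Fin (d i))] : Prop :=
  ∀ ℓ : ℕ, ∀ z z' : ∀ i, Fin (d i), ∃ g : G,
    (fun x : ∀ i, Fin (d i) => op g • x) '' cylinder d ℓ z = cylinder d ℓ z'

/-!
A nontrivial `g ∈ Rist(u)` moves some point `y`, necessarily in `C_u`, and since `g` acts by
tree automorphisms it then moves every point of a small cylinder `C_v ⊆ C_u` around `y`. Given
`x ∈ C_u`, level transitivity yields `h` carrying the cylinder of `x` at the level of `v` onto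
`C_v`; as `h` preserves levels and `x·h ∈ C_u`, it maps `C_u` onto itself. Hence `h g h⁻¹` lies
in `Rist(u)` and moves `x`.
-/

section Cylinder

variable {d : ℕ → ℕ}

theorem mem_cylinder_self (ℓ : ℕ) (z : ∀ i, Fin (d i)) : z ∈ cylinder d ℓ z :=
  fun _ _ => rfl

theorem cylinder_subset_cylinder {ℓ n : ℕ} (hℓn : ℓ ≤ n) {w z : ∀ i, Fin (d i)}
    (hw : w ∈ cylinder d ℓ z) : cylinder d n w ⊆ cylinder d ℓ z :=
  fun _ hv j hj => (hv j (lt_of_lt_of_le hj hℓn)).trans (hw j hj)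

theorem cylinder_eq_of_mem {ℓ : ℕ} {x z : ∀ i, Fin (d i)} (hx : x ∈ cylinder d ℓ z) :
    cylinder d ℓ x = cylinder d ℓ z := by
  ext w
  exact ⟨fun hw j hj => (hw j hj).trans (hx j hj), fun hw j hj => (hw j hj).trans (hx j hj).symm⟩

end Cylinder

section RigidStabilizer

variable {G X : Type*} [Group G] [MulAction Gᵐᵒᵖ X]

theorem op_conj_smul (g h : G) (x : X) :
    op (h * g * h⁻¹) • x = op h⁻¹ • op g • op h • x := by
  rw [op_mul, op_mul, mul_smul, mul_smul]

theorem conj_mem_rigidStabilizer_preimage_s16 {U : Set X} {g : G} (hg : g ∈ rigidStabilizer G U)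
    (h : G) : h * g * h⁻¹ ∈ rigidStabilizer G ((fun x => op h • x) ⁻¹' U) := by
  intro x hx
  rw [op_conj_smul, hg _ hx, op_inv, inv_smul_smul]

theorem conj_mem_rigidStabilizer_s16 {U : Set X} {g h : G} (hg : g ∈ rigidStabilizer G U)
    (hU : (fun x => op h • x) '' U = U) : h * g * h⁻¹ ∈ rigidStabilizer G U := by
  have hpre : (fun x => op h • x) ⁻¹' U = U := by
    ext x
    rw [Set.mem_preimage]
    nth_rw 1 [← hU]
    exact (MulAction.injective (op h)).mem_set_image
  simpa only [hpre] using conj_mem_rigidStabilizer_preimage_s16 hg h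

theorem exists_mem_smul_ne_of_rigidStabilizer_ne_bot
    (hfaith : ∀ g : G, (∀ x : X, op g • x = x) → g = 1) {U : Set X}
    (hU : rigidStabilizer G U ≠ ⊥) : ∃ g ∈ rigidStabilizer G U, ∃ y ∈ U, op g • y ≠ y := by
  obtain ⟨⟨g, hgU⟩, hg1⟩ := Subgroup.ne_bot_iff_exists_ne_one.mp hU
  obtain ⟨y, hy⟩ : ∃ y, op g • y ≠ y := by
    by_contra! hfix
    exact hg1 (Subtype.ext (hfaith g hfix))
  exact ⟨g, hgU, y, by_contra fun hyU => hy (hgU y hyU), hy⟩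

end RigidStabilizer

namespace ActsByTreeAutomorphisms

variable {G : Type*} [Group G] {d : ℕ → ℕ} [MulAction Gᵐᵒᵖ (∀ i, Fin (d i))]

theorem image_cylinder (htree : ActsByTreeAutomorphisms G d) (g : G) (ℓ : ℕ)
    (y : ∀ i, Fin (d i)) :
    (fun x => op g • x) '' cylinder d ℓ y = cylinder d ℓ (op g • y) := by
  obtain ⟨z', hz'⟩ := htree g ℓ y
  rw [hz']
  exact (cylinder_eq_of_mem (hz' ▸ Set.mem_image_of_mem _ (mem_cylinder_self ℓ y))).symm

theorem image_cylinder_eq_self (htree : ActsByTreeAutomorphisms G d) {h : G} {ℓ : ℕ}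
    {x z : ∀ i, Fin (d i)} (hx : x ∈ cylinder d ℓ z) (hhx : op h • x ∈ cylinder d ℓ z) :
    (fun w => op h • w) '' cylinder d ℓ z = cylinder d ℓ z := by
  nth_rw 1 [← cylinder_eq_of_mem hx]
  rw [htree.image_cylinder, cylinder_eq_of_mem hhx]

theorem smul_ne_of_mem_cylinder (htree : ActsByTreeAutomorphisms G d) {g : G} {n i : ℕ}
    (hin : i < n) {y w : ∀ i, Fin (d i)} (hy : (op g • y) i ≠ y i) (hw : w ∈ cylinder d n y) :
    op g • w ≠ w := by
  have hgw : op g • w ∈ cylinder d n (op g • y) :=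
    htree.image_cylinder g n y ▸ Set.mem_image_of_mem _ hw
  intro hfix
  apply hy
  rw [← hgw i hin, hfix, hw i hin]

end ActsByTreeAutomorphisms

theorem rist_no_fixed_point_in_cylinder_general
    {G : Type*} [Group G] (d : ℕ → ℕ)
    [MulAction Gᵐᵒᵖ (∀ i, Fin (d i))]
    (hfaith : ∀ g : G, (∀ x : ∀ i, Fin (d i), op g • x = x) → g = 1)
    (htree : ActsByTreeAutomorphisms G d)
    (htrans : LevelTransitive G d)
    (ℓ : ℕ) (z : ∀ i, Fin (d i))
    (hnontriv : rigidStabilizer G (cylinder d ℓ z) ≠ ⊥) :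
    ∀ x ∈ cylinder d ℓ z,
      ∃ g ∈ rigidStabilizer G (cylinder d ℓ z), op g • x ≠ x := by
  intro x hx
  obtain ⟨g, hgR, y, hyC, hgy⟩ := exists_mem_smul_ne_of_rigidStabilizer_ne_bot hfaith hnontriv
  obtain ⟨i, hi⟩ := Function.ne_iff.mp hgy
  set n := max ℓ (i + 1)
  obtain ⟨h, hh⟩ := htrans n x y
  have hhx : op h • x ∈ cylinder d n y := hh ▸ Set.mem_image_of_mem _ (mem_cylinder_self n x)
  have hhxC : op h • x ∈ cylinder d ℓ z := cylinder_subset_cylinder (le_max_left _ _) hyC hhx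
  refine ⟨h * g * h⁻¹, conj_mem_rigidStabilizer_s16 hgR (htree.image_cylinder_eq_self hx hhxC), ?_⟩
  rw [op_conj_smul, op_inv, Ne, inv_smul_eq_iff]
  exact htree.smul_ne_of_mem_cylinder (by omega) hi hhx

/-- If `Γ` acts faithfully by tree automorphisms and level transitively on the boundary
`∏ i, Fin (d i)` of the spherically symmetric rooted tree with valency sequence `d`
(the right action is encoded as a left action of `Γᵐᵒᵖ`, so `x·g = op g • x`; a word
`u` of length `ℓ` is represented by a boundary point `z` extending it, with cylinder
`cylinder d ℓ z`), and the rigid vertex stabilizer of a word is nontrivial, then it has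
no fixed point in the corresponding cylinder. -/
theorem rist_no_fixed_point_in_cylinder
    {G : Type*} [Group G] (d : ℕ → ℕ) (hd : ∀ i, 2 ≤ d i)
    [MulAction Gᵐᵒᵖ (∀ i, Fin (d i))]
    (hcont : ∀ g : G, Continuous fun x : ∀ i, Fin (d i) => op g • x)
    (hfaith : ∀ g : G, (∀ x : ∀ i, Fin (d i), op g • x = x) → g = 1)
    (htree : ActsByTreeAutomorphisms G d)
    (htrans : LevelTransitive G d)
    (ℓ : ℕ) (z : ∀ i, Fin (d i))
    (hnontriv : rigidStabilizer G (cylinder d ℓ z) ≠ ⊥) :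
    ∀ x ∈ cylinder d ℓ z,
      ∃ g ∈ rigidStabilizer G (cylinder d ℓ z), op g • x ≠ x :=
  rist_no_fixed_point_in_cylinder_general d hfaith htree htrans ℓ z hnontriv
end
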